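/- arXiv:2109.02750 — 5 statements merged into one kernel-verified Lean document; each statement's English description precedes it below -/
import Mathlib

section
/- Let 𝒜 be a complex unital Banach algebra and let p, q, a ∈ 𝒜 satisfy p * q = p, q * p = q, and q * a = a * q. Then the spectral radius of p * a is at most the spectral radius of a * q. -/
/-!
The spectral radius only sees the nonzero spectrum, which is invariant under `x * y ↦ y * x`
(Jacobson's lemma). Since `p * a = p * (a * q)` and `(a * q) * p = a * q`, the elements
`p * a` and `a * q` have the same nonzero spectrum, hence the same spectral radius.
-/

open scoped NNReal ENNReal

section SpectralRadius

variable {𝕜 A : Type*} [NormedField 𝕜] [Ring A] [Algebra 𝕜 A]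

theorem spectralRadius_le_of_spectrum_diff_zero_subset {a b : A}
    (h : spectrum 𝕜 a \ {0} ⊆ spectrum 𝕜 b \ {0}) :
    spectralRadius 𝕜 a ≤ spectralRadius 𝕜 b := by
  refine iSup₂_le fun k hk => ?_
  rcases eq_or_ne k 0 with rfl | hk0
  · simp
  · exact le_iSup₂ (f := fun k (_ : k ∈ spectrum 𝕜 b) => (‖k‖₊ : ℝ≥0∞)) k (h ⟨hk, hk0⟩).1

theorem spectralRadius_eq_of_spectrum_diff_zero_eq {a b : A}
    (h : spectrum 𝕜 a \ {0} = spectrum 𝕜 b \ {0}) :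
    spectralRadius 𝕜 a = spectralRadius 𝕜 b :=
  le_antisymm (spectralRadius_le_of_spectrum_diff_zero_subset h.le)
    (spectralRadius_le_of_spectrum_diff_zero_subset h.ge)

theorem spectralRadius_mul_comm (a b : A) :
    spectralRadius 𝕜 (a * b) = spectralRadius 𝕜 (b * a) :=
  spectralRadius_eq_of_spectrum_diff_zero_eq (spectrum.nonzero_mul_comm a b)

end SpectralRadius

theorem spectralRadius_mul_le_of_projections_general {A : Type*} [NormedRing A]
    [NormedAlgebra ℂ A] (p q a : A)
    (hpq : p * q = p) (hqp : q * p = q) (hqa : q * a = a * q) :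
    spectralRadius ℂ (p * a) ≤ spectralRadius ℂ (a * q) := by
  have hpa : p * a = p * (a * q) := by rw [← hqa, ← mul_assoc, hpq]
  have haqp : a * q * p = a * q := by rw [mul_assoc, hqp]
  rw [hpa, spectralRadius_mul_comm, haqp]

/-- In a complex unital Banach algebra, if `p * q = p`, `q * p = q` and
`q * a = a * q`, then the spectral radius of `p * a` is at most that of `a * q`. -/
theorem spectralRadius_mul_le_of_projections {A : Type*} [NormedRing A]
    [NormedAlgebra ℂ A] [CompleteSpace A] (p q a : A)
    (hpq : p * q = p) (hqp : q * p = q) (hqa : q * a = a * q) :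
    spectralRadius ℂ (p * a) ≤ spectralRadius ℂ (a * q) :=
  spectralRadius_mul_le_of_projections_general p q a hpq hqp hqa
end

section
/- Let E be a complex Banach space, let P and π be bounded idempotent operators on E (P ∘ P = P and π ∘ π = π) with ker P = ker π, and let A be a bounded operator on E with A ∘ π = π ∘ A. Then the spectral radius of P ∘ A is at most the spectral radius of A ∘ π. -/
/-!
Equal kernels give `P π = P` and `π P = π`. Hence `X = A π` satisfies `P A = P X` and
`X P = X`, so `(P A)ⁿ = P Xⁿ` for `n ≥ 1` and `‖(P A)ⁿ‖ ≤ ‖P‖ ‖Xⁿ‖`. Taking `n`-th roots,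
Gelfand's formula gives the bound, since `‖P‖ ^ (1 / n) → 1`.
-/

open Filter ENNReal Topology
open scoped NNReal

theorem ContinuousLinearMap.mul_eq_left_of_ker_le {R M : Type*} [Semiring R]
    [TopologicalSpace M] [AddCommGroup M] [Module R M] {p q : M →L[R] M}
    (hq : IsIdempotentElem q)
    (h : LinearMap.ker (q : M →ₗ[R] M) ≤ LinearMap.ker (p : M →ₗ[R] M)) :
    p * q = p :=
  ContinuousLinearMap.coe_inj.1 <|
    (LinearMap.IsIdempotentElem.comp_eq_left_iff (isIdempotentElem_toLinearMap_iff.2 hq) _).2 h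

theorem mul_pow_succ_of_mul_eq_self {M : Type*} [Monoid M] {p x : M} (h : x * p = x) (n : ℕ) :
    (p * x) ^ (n + 1) = p * x ^ (n + 1) := by
  induction n with
  | zero => simp
  | succ n ih =>
    have hxp : x ^ (n + 1) * p = x ^ (n + 1) := by rw [pow_succ, mul_assoc, h]
    calc (p * x) ^ (n + 2) = p * (x ^ (n + 1) * p) * x := by
          rw [pow_succ, ih]; simp only [mul_assoc]
      _ = p * x ^ (n + 2) := by rw [hxp, mul_assoc, ← pow_succ]

theorem ENNReal.tendsto_rpow_one_div_nat {x : ℝ≥0∞} (h0 : x ≠ 0) (htop : x ≠ ∞) :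
    Tendsto (fun n : ℕ => x ^ (1 / n : ℝ)) atTop (𝓝 1) := by
  lift x to ℝ≥0 using htop
  have hx : x ≠ 0 := by exact_mod_cast h0
  have := (tendsto_const_nhds (x := x)).nnrpow tendsto_one_div_atTop_nhds_zero_nat (Or.inl hx)
  rw [NNReal.rpow_zero] at this
  simpa [← ENNReal.coe_rpow_of_ne_zero hx] using ENNReal.tendsto_coe.2 this

theorem spectralRadius_le_of_nnnorm_pow_le {A : Type*} [NormedRing A] [NormedAlgebra ℂ A]
    [CompleteSpace A] {a b : A} (K : ℝ≥0)
    (h : ∀ᶠ n in atTop, ‖a ^ n‖₊ ≤ K * ‖b ^ n‖₊) :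
    spectralRadius ℂ a ≤ spectralRadius ℂ b := by
  -- `K + 1` rather than `K`, so that its `n`-th roots tend to `1` even when `K = 0`
  have hK : Tendsto (fun n : ℕ => ((K + 1 : ℝ≥0) : ℝ≥0∞) ^ (1 / n : ℝ)) atTop (𝓝 1) :=
    tendsto_rpow_one_div_nat (by positivity) coe_ne_top
  have hb := ENNReal.Tendsto.mul hK (Or.inl one_ne_zero) (spectrum.gelfand_formula b)
    (Or.inr one_ne_top)
  rw [one_mul] at hb
  refine le_of_tendsto_of_tendsto (spectrum.gelfand_formula a) hb ?_
  filter_upwards [h] with n hn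
  have hn' : (‖a ^ n‖₊ : ℝ≥0∞) ≤ ((K + 1 : ℝ≥0) : ℝ≥0∞) * ‖b ^ n‖₊ := by
    rw [← coe_mul, coe_le_coe]
    exact hn.trans (by gcongr; exact le_add_of_nonneg_right zero_le_one)
  calc (‖a ^ n‖₊ : ℝ≥0∞) ^ (1 / n : ℝ)
      ≤ (((K + 1 : ℝ≥0) : ℝ≥0∞) * ‖b ^ n‖₊) ^ (1 / n : ℝ) :=
        rpow_le_rpow hn' (by positivity)
    _ = _ := mul_rpow_of_nonneg _ _ (by positivity)

/-- If `P` and `π` are bounded idempotent operators on a complex Banach space with the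
same kernel, and `A` is a bounded operator commuting with `π`, then the spectral radius
of `P ∘ A` is at most the spectral radius of `A ∘ π`. -/
theorem spectralRadius_comp_le_of_idempotents {E : Type*} [NormedAddCommGroup E]
    [NormedSpace ℂ E] [CompleteSpace E] (P π A : E →L[ℂ] E)
    (hP : P ∘L P = P) (hπ : π ∘L π = π)
    (hker : LinearMap.ker (P : E →ₗ[ℂ] E) = LinearMap.ker (π : E →ₗ[ℂ] E))
    (hA : A ∘L π = π ∘L A) :
    spectralRadius ℂ (P ∘L A) ≤ spectralRadius ℂ (A ∘L π) := by
  have hPπ : P * π = P := ContinuousLinearMap.mul_eq_left_of_ker_le hπ hker.ge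
  have hπP : π * P = π := ContinuousLinearMap.mul_eq_left_of_ker_le hP hker.le
  have hPA : P * A = P * (A * π) := by
    conv_lhs => rw [← hPπ]
    rw [mul_assoc]
    exact congrArg (P * ·) hA.symm
  have hAπP : A * π * P = A * π := by rw [mul_assoc, hπP]
  refine spectralRadius_le_of_nnnorm_pow_le ‖P‖₊ (eventually_atTop.2 ⟨1, fun n hn => ?_⟩)
  obtain ⟨m, rfl⟩ := Nat.exists_eq_add_of_le' hn
  change ‖(P * A) ^ (m + 1)‖₊ ≤ _
  rw [hPA, mul_pow_succ_of_mul_eq_self hAπP]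
  exact nnnorm_mul_le _ _
end

section
/- Let (M,d) be a compact metric space, α ∈ (0,1], and let T : M → M be a homeomorphism whose inverse T⁻¹ is Lipschitz with constant Λ > 1. Let h : M → ℂ be α-Hölder with constant H, and suppose there are constants C₀ > 0 and θ > 0 such that sup_{x∈M} ∏_{k=0}^{n-1} |h(T^{-k}x)| ≤ C₀·θⁿ for every n ≥ 0. Then there exists C > 0 such that for every n ≥ 1 and all x, y ∈ M: |∏_{k=0}^{n-1} h(T^{-k}x) − ∏_{k=0}^{n-1} h(T^{-k}y)| ≤ C·(θΛ^α)ⁿ·d(x,y)^α. -/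
/-!
Write `Pₙ(x) = ∏_{k<n} h(T⁻ᵏx)`. Telescoping,
`Pₙ(x) - Pₙ(y) = ∑_{k<n} Pₖ(x) (h(T⁻ᵏx) - h(T⁻ᵏy)) P_{n-k-1}(T⁻ᵏ⁻¹y)`.
The outer factors are at most `C₀θᵏ` and `C₀θⁿ⁻ᵏ⁻¹`, the middle one is at most
`|H| (Λ^α)ᵏ d(x,y)^α`, and since `Λ^α > 1` the geometric sum `∑_{k<n} (Λ^α)ᵏ` is at most
`(Λ^α)ⁿ / (Λ^α - 1)`.
-/

open Finset

theorem prod_range_sub_prod_range_eq_sum {R : Type*} [CommRing R] (a b : ℕ → R) (n : ℕ) :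
    ∏ k ∈ range n, a k - ∏ k ∈ range n, b k =
      ∑ k ∈ range n, (∏ j ∈ range k, a j) * (a k - b k) * ∏ j ∈ Ico (k + 1) n, b j := by
  induction n with
  | zero => simp
  | succ n ih =>
    have tail_succ : ∀ k ∈ range n,
        ∏ j ∈ Ico (k + 1) (n + 1), b j = (∏ j ∈ Ico (k + 1) n, b j) * b n :=
      fun k hk => prod_Ico_succ_top (mem_range.mp hk) b
    rw [prod_range_succ, prod_range_succ, sum_range_succ,
      sum_congr rfl fun k hk => by rw [tail_succ k hk, ← mul_assoc], ← sum_mul, ← ih,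
      Ico_self, prod_empty]
    ring

theorem norm_prod_range_sub_prod_range_le {R : Type*} [NormedCommRing R] [NormOneClass R]
    (a b : ℕ → R) (n : ℕ) :
    ‖∏ k ∈ range n, a k - ∏ k ∈ range n, b k‖ ≤
      ∑ k ∈ range n, (∏ j ∈ range k, ‖a j‖) * ‖a k - b k‖ * ∏ j ∈ Ico (k + 1) n, ‖b j‖ := by
  rw [prod_range_sub_prod_range_eq_sum]
  refine (norm_sum_le _ _).trans (sum_le_sum fun k _ => ?_)
  refine (norm_mul_le _ _).trans ?_
  gcongr
  · exact (norm_mul_le _ _).trans (by gcongr; exact norm_prod_le _ _)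
  · exact norm_prod_le _ _

theorem dist_iterate_le_pow_mul {M : Type*} [PseudoMetricSpace M] {f : M → M} {Λ : ℝ}
    (hΛ : 0 ≤ Λ) (hf : ∀ x y, dist (f x) (f y) ≤ Λ * dist x y) (k : ℕ) (x y : M) :
    dist (f^[k] x) (f^[k] y) ≤ Λ ^ k * dist x y := by
  lift Λ to NNReal using hΛ
  exact_mod_cast ((LipschitzWith.of_dist_le_mul hf).iterate k).dist_le_mul x y

theorem norm_sub_comp_iterate_le {M E : Type*} [PseudoMetricSpace M] [SeminormedAddCommGroup E]
    {f : M → M} {g : M → E} {Λ α H : ℝ} (hΛ : 0 ≤ Λ)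
    (hf : ∀ x y, dist (f x) (f y) ≤ Λ * dist x y) (hα : 0 ≤ α) (hH : 0 ≤ H)
    (hg : ∀ x y, ‖g x - g y‖ ≤ H * dist x y ^ α) (k : ℕ) (x y : M) :
    ‖g (f^[k] x) - g (f^[k] y)‖ ≤ H * dist x y ^ α * (Λ ^ α) ^ k := by
  calc ‖g (f^[k] x) - g (f^[k] y)‖ ≤ H * dist (f^[k] x) (f^[k] y) ^ α := hg _ _
    _ ≤ H * (Λ ^ k * dist x y) ^ α := by gcongr; exact dist_iterate_le_pow_mul hΛ hf k x y
    _ = H * dist x y ^ α * (Λ ^ α) ^ k := by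
      rw [Real.mul_rpow (by positivity) dist_nonneg, Real.rpow_pow_comm hΛ]; ring

theorem norm_prod_iterate_sub_prod_iterate_le {M R : Type*} [NormedCommRing R] [NormOneClass R]
    {f : M → M} {g : M → R} {C₀ θ D L : ℝ}
    (hbound : ∀ n z, ∏ k ∈ range n, ‖g (f^[k] z)‖ ≤ C₀ * θ ^ n) {x y : M}
    (hdiff : ∀ k, ‖g (f^[k] x) - g (f^[k] y)‖ ≤ D * L ^ k) (n : ℕ) :
    ‖∏ k ∈ range n, g (f^[k] x) - ∏ k ∈ range n, g (f^[k] y)‖ ≤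
      C₀ ^ 2 * D * θ ^ (n - 1) * ∑ k ∈ range n, L ^ k := by
  have tail_le : ∀ k z, ∏ j ∈ Ico k n, ‖g (f^[j] z)‖ ≤ C₀ * θ ^ (n - k) := fun k z => by
    rw [prod_Ico_eq_prod_range]
    simpa only [add_comm k, Function.iterate_add_apply] using hbound (n - k) (f^[k] z)
  calc ‖∏ k ∈ range n, g (f^[k] x) - ∏ k ∈ range n, g (f^[k] y)‖
      ≤ ∑ k ∈ range n, (∏ j ∈ range k, ‖g (f^[j] x)‖) * ‖g (f^[k] x) - g (f^[k] y)‖ *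
          ∏ j ∈ Ico (k + 1) n, ‖g (f^[j] y)‖ := norm_prod_range_sub_prod_range_le _ _ n
    _ ≤ ∑ k ∈ range n, C₀ * θ ^ k * (D * L ^ k) * (C₀ * θ ^ (n - (k + 1))) := by
      refine sum_le_sum fun k _ => ?_
      have head_nonneg : 0 ≤ C₀ * θ ^ k :=
        (prod_nonneg fun _ _ => norm_nonneg _).trans (hbound k x)
      gcongr
      · exact mul_nonneg head_nonneg ((norm_nonneg _).trans (hdiff k))
      · exact hbound k x
      · exact hdiff k
      · exact tail_le (k + 1) y
    _ = C₀ ^ 2 * D * θ ^ (n - 1) * ∑ k ∈ range n, L ^ k := by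
      rw [mul_sum]
      refine sum_congr rfl fun k hk => ?_
      rw [show n - 1 = k + (n - (k + 1)) by have := mem_range.mp hk; omega, pow_add]
      ring

theorem pow_pred_mul_geom_sum_le {θ L : ℝ} (hθ : 0 < θ) (hL : 1 < L) (n : ℕ) :
    θ ^ (n - 1) * ∑ k ∈ range n, L ^ k ≤ (θ * L) ^ n / (θ * (L - 1)) := by
  have hL' : 0 < L - 1 := sub_pos.mpr hL
  cases n with
  | zero => simp only [range_zero, sum_empty, mul_zero, pow_zero]; positivity
  | succ m =>
    calc θ ^ (m + 1 - 1) * ∑ k ∈ range (m + 1), L ^ k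
          = θ ^ m * ((L ^ (m + 1) - 1) / (L - 1)) := by
          rw [geom_sum_eq hL.ne', Nat.add_sub_cancel]
      _ ≤ θ ^ m * (L ^ (m + 1) / (L - 1)) := by gcongr; linarith
      _ = (θ * L) ^ (m + 1) / (θ * (L - 1)) := by field_simp; ring

theorem holder_estimate_prod_transfer_general {M : Type*} [MetricSpace M]
    (α : ℝ) (hα : 0 < α)
    (T : M ≃ₜ M) (Λ : ℝ) (hΛ : 1 < Λ)
    (hLip : ∀ x y : M, dist (T.symm x) (T.symm y) ≤ Λ * dist x y)
    (h : M → ℂ) (H : ℝ)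
    (hHold : ∀ x y : M, ‖h x - h y‖ ≤ H * dist x y ^ α)
    (C₀ θ : ℝ) (hθ : 0 < θ)
    (hbound : ∀ (n : ℕ) (x : M),
      ∏ k ∈ Finset.range n, ‖h ((T.symm)^[k] x)‖ ≤ C₀ * θ ^ n) :
    ∃ C > 0, ∀ n : ℕ, 1 ≤ n → ∀ x y : M,
      ‖(∏ k ∈ Finset.range n, h ((T.symm)^[k] x)) -
          ∏ k ∈ Finset.range n, h ((T.symm)^[k] y)‖ ≤
        C * (θ * Λ ^ α) ^ n * dist x y ^ α := by
  have hΛα : 1 < Λ ^ α := Real.one_lt_rpow hΛ hα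
  have hHold' : ∀ x y, ‖h x - h y‖ ≤ |H| * dist x y ^ α := fun x y =>
    (hHold x y).trans (by gcongr; exact le_abs_self H)
  set K := C₀ ^ 2 * |H| / (θ * (Λ ^ α - 1))
  have hK : 0 ≤ K := div_nonneg (by positivity) (mul_pos hθ (sub_pos.mpr hΛα)).le
  refine ⟨K + 1, by linarith, fun n _ x y => ?_⟩
  calc _ ≤ C₀ ^ 2 * (|H| * dist x y ^ α) * θ ^ (n - 1) * ∑ k ∈ range n, (Λ ^ α) ^ k :=
        norm_prod_iterate_sub_prod_iterate_le hbound
          (norm_sub_comp_iterate_le (by linarith) hLip hα.le (abs_nonneg H) hHold' · x y) n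
    _ ≤ C₀ ^ 2 * (|H| * dist x y ^ α) * ((θ * Λ ^ α) ^ n / (θ * (Λ ^ α - 1))) := by
        rw [mul_assoc]; gcongr; exact pow_pred_mul_geom_sum_le hθ hΛα n
    _ = K * (θ * Λ ^ α) ^ n * dist x y ^ α := by ring
    _ ≤ (K + 1) * (θ * Λ ^ α) ^ n * dist x y ^ α := by gcongr; linarith

/-- Hölder estimate on the cocycle products `∏_{k<n} h(T^{-k}x)`: if `T⁻¹` is
`Λ`-Lipschitz, `h` is `α`-Hölder and the sup-products are bounded by `C₀ θⁿ`, then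
the products are `α`-Hölder with constant `C (θ Λ^α)ⁿ`. -/
theorem holder_estimate_prod_transfer {M : Type*} [MetricSpace M] [CompactSpace M]
    (α : ℝ) (hα : 0 < α) (hα1 : α ≤ 1)
    (T : M ≃ₜ M) (Λ : ℝ) (hΛ : 1 < Λ)
    (hLip : ∀ x y : M, dist (T.symm x) (T.symm y) ≤ Λ * dist x y)
    (h : M → ℂ) (H : ℝ)
    (hHold : ∀ x y : M, ‖h x - h y‖ ≤ H * dist x y ^ α)
    (C₀ θ : ℝ) (hC₀ : 0 < C₀) (hθ : 0 < θ)
    (hbound : ∀ (n : ℕ) (x : M),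
      ∏ k ∈ Finset.range n, ‖h ((T.symm)^[k] x)‖ ≤ C₀ * θ ^ n) :
    ∃ C > 0, ∀ n : ℕ, 1 ≤ n → ∀ x y : M,
      ‖(∏ k ∈ Finset.range n, h ((T.symm)^[k] x)) -
          ∏ k ∈ Finset.range n, h ((T.symm)^[k] y)‖ ≤
        C * (θ * Λ ^ α) ^ n * dist x y ^ α :=
  holder_estimate_prod_transfer_general α hα T Λ hΛ hLip h H hHold C₀ θ hθ hbound
end

section
/- Let (M,d) be a compact metric space, α ∈ (0,1], and let T : M → M be a homeomorphism whose inverse T⁻¹ is Lipschitz with constant Λ > 1. Let h : M → ℂ be α-Hölder, and suppose there are constants C₀ > 0 and 0 < θ < 1 with θ·Λ^α < 1 such that sup_{x∈M} ∏_{k=0}^{n-1} |h(T^{-k}x)| ≤ C₀·θⁿ for every n ≥ 0. Then for every bounded α-Hölder function w : M → ℂ, the partial sums v_N := Σ_{n=0}^{N−1} L_hⁿ w converge uniformly on M to a function v; this v is bounded and α-Hölder; v is the unique continuous function on M satisfying v(x) = h(x)·v(T⁻¹x) + w(x) for all x ∈ M; and ‖v − v_N‖_∞ ≤ C₀·θᴺ·(1−θ)⁻¹·‖w‖_∞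 for every N. -/
/-!
The iterates of the transfer operator are `L_hⁿ w = hₙ · (w ∘ T⁻ⁿ)`, where
`hₙ = ∏_{k<n} h ∘ T⁻ᵏ` is the multiplicative Birkhoff cocycle, so the hypothesis `‖hₙ‖ ≤ C₀ θⁿ`
dominates the Neumann series by a geometric series: this gives uniform convergence, the tail
bound, and the equation `v = L_h v + w` by shifting the index. A continuous fixed point `u` of
`L_h` is bounded on the compact space, so `‖u‖ = ‖L_hⁿ u‖ ≤ C₀ θⁿ ‖u‖_∞ → 0`, which gives
uniqueness. For the Hölder bound, telescoping `hₙ(x) - hₙ(y)` into `n` terms, each with one factor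
`h(T⁻ʲx) - h(T⁻ʲy) = O(Λ^{αj} d(x,y)^α)`, shows that `L_hⁿ w` has Hölder constant
`O(n (θΛ^α)ⁿ⁻¹)`, which is summable because `θΛ^α < 1`.
-/

open Finset Filter Function Topology

section BirkhoffProd

variable {α M : Type*}

def birkhoffProd [CommMonoid M] (f : α → α) (g : α → M) (n : ℕ) (x : α) : M :=
  ∏ k ∈ range n, g (f^[k] x)

@[simp]
theorem birkhoffProd_zero [CommMonoid M] (f : α → α) (g : α → M) (x : α) :
    birkhoffProd f g 0 x = 1 :=
  prod_range_zero _

theorem birkhoffProd_succ [CommMonoid M] (f : α → α) (g : α → M) (n : ℕ) (x : α) :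
    birkhoffProd f g (n + 1) x = birkhoffProd f g n x * g (f^[n] x) :=
  prod_range_succ _ _

theorem birkhoffProd_succ' [CommMonoid M] (f : α → α) (g : α → M) (n : ℕ) (x : α) :
    birkhoffProd f g (n + 1) x = g x * birkhoffProd f g n (f x) :=
  (prod_range_succ' _ _).trans (mul_comm _ _)

theorem birkhoffProd_sub_birkhoffProd [CommRing M] (f : α → α) (g : α → M) (n : ℕ) (x y : α) :
    birkhoffProd f g n x - birkhoffProd f g n y =
      ∑ j ∈ range n, birkhoffProd f g j y * (g (f^[j] x) - g (f^[j] y)) *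
        birkhoffProd f g (n - 1 - j) (f^[j + 1] x) := by
  have htelescope :=
    sum_range_sub' (fun j => birkhoffProd f g j y * birkhoffProd f g (n - j) (f^[j] x)) n
  simp only [Nat.sub_zero, Nat.sub_self, iterate_zero_apply, birkhoffProd_zero, one_mul,
    mul_one] at htelescope
  rw [← htelescope]
  refine sum_congr rfl fun j hj => ?_
  obtain ⟨m, rfl⟩ : ∃ m, n = j + 1 + m := ⟨n - (j + 1), by grind⟩
  rw [show j + 1 + m - j = m + 1 by omega, show j + 1 + m - (j + 1) = m by omega,
    show j + 1 + m - 1 - j = m by omega, birkhoffProd_succ', birkhoffProd_succ,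
    ← iterate_succ_apply' f]
  ring

end BirkhoffProd

section TransferOperator

variable {α R : Type*} [CommMonoid R]

-- The paper's `L_h` is `transferOperator T⁻¹ h`.
def transferOperator (f : α → α) (h : α → R) (u : α → R) : α → R := fun x => h x * u (f x)

theorem transferOperator_iterate_apply (f : α → α) (h u : α → R) (n : ℕ) (x : α) :
    (transferOperator f h)^[n] u x = birkhoffProd f h n x * u (f^[n] x) := by
  induction n generalizing x with
  | zero => simp
  | succ n ih =>
    rw [iterate_succ_apply', transferOperator, ih, birkhoffProd_succ', iterate_succ_apply]
    exact (mul_assoc _ _ _).symm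

end TransferOperator

section Holder

variable {X E : Type*} [PseudoMetricSpace X] [SeminormedAddCommGroup E]

theorem norm_le_max_zero_mul_rpow {u : X → E} {α K : ℝ}
    (hu : ∀ x y, ‖u x - u y‖ ≤ K * dist x y ^ α) (x y : X) :
    ‖u x - u y‖ ≤ max K 0 * dist x y ^ α :=
  (hu x y).trans (by gcongr; exact le_max_left _ _)

theorem dist_iterate_le_of_dist_le_mul {f : X → X} {Λ : ℝ} (hΛ : 0 ≤ Λ)
    (hf : ∀ x y, dist (f x) (f y) ≤ Λ * dist x y) (n : ℕ) (x y : X) :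
    dist (f^[n] x) (f^[n] y) ≤ Λ ^ n * dist x y := by
  have hL : LipschitzWith Λ.toNNReal f :=
    .of_dist_le_mul fun x y => by simpa [Real.coe_toNNReal _ hΛ] using hf x y
  simpa [Real.coe_toNNReal _ hΛ] using (hL.iterate n).dist_le_mul x y

theorem norm_comp_iterate_sub_le {f : X → X} {u : X → E} {Λ α K : ℝ} (hΛ : 0 ≤ Λ) (hα : 0 ≤ α)
    (hK : 0 ≤ K) (hf : ∀ x y, dist (f x) (f y) ≤ Λ * dist x y)
    (hu : ∀ x y, ‖u x - u y‖ ≤ K * dist x y ^ α) (n : ℕ) (x y : X) :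
    ‖u (f^[n] x) - u (f^[n] y)‖ ≤ K * (Λ ^ α) ^ n * dist x y ^ α :=
  calc ‖u (f^[n] x) - u (f^[n] y)‖ ≤ K * dist (f^[n] x) (f^[n] y) ^ α := hu _ _
    _ ≤ K * (Λ ^ n * dist x y) ^ α := by
        gcongr; exact dist_iterate_le_of_dist_le_mul hΛ hf n x y
    _ = K * (Λ ^ α) ^ n * dist x y ^ α := by
        rw [Real.mul_rpow (by positivity) dist_nonneg, Real.rpow_pow_comm hΛ, mul_assoc]

theorem continuous_of_norm_sub_le_mul_rpow {u : X → E} {α K : ℝ} (hα : 0 < α)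
    (hu : ∀ x y, ‖u x - u y‖ ≤ K * dist x y ^ α) : Continuous u := by
  refine continuous_iff_continuousAt.2 fun b => tendsto_iff_norm_sub_tendsto_zero.2 ?_
  have hlim : Tendsto (fun x => K * dist x b ^ α) (𝓝 b) (𝓝 (K * dist b b ^ α)) :=
    (((continuous_id.dist continuous_const).rpow_const fun _ => Or.inr hα.le).const_mul K).tendsto b
  rw [dist_self, Real.zero_rpow hα.ne', mul_zero] at hlim
  exact squeeze_zero (fun _ => norm_nonneg _) (fun x => hu x b) hlim

end Holder

theorem summable_natCast_mul_pow_sub_one {r : ℝ} (hr₀ : 0 ≤ r) (hr₁ : r < 1) :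
    Summable fun n : ℕ => (n : ℝ) * r ^ (n - 1) := by
  rw [← summable_nat_add_iff 1]
  refine ((summable_pow_mul_geometric_of_norm_lt_one 1 (by rwa [Real.norm_of_nonneg hr₀])).add
    (summable_geometric_of_lt_one hr₀ hr₁)).congr fun n => ?_
  simp only [pow_one, Nat.add_sub_cancel, Nat.cast_add, Nat.cast_one]
  ring

theorem norm_tsum_sub_tsum_le {ι E : Type*} [NormedAddCommGroup E] {a b : ι → E} {c : ι → ℝ}
    (ha : Summable a) (hb : Summable b) (hc : Summable c) (hab : ∀ i, ‖a i - b i‖ ≤ c i) :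
    ‖∑' i, a i - ∑' i, b i‖ ≤ ∑' i, c i := by
  rw [← ha.tsum_sub hb]
  exact tsum_of_norm_bounded hc.hasSum hab

section NeumannSeries

variable {X R : Type*} [NormedCommRing R] {f : X → X} {h w : X → R} {C θ : ℝ}

theorem norm_transferOperator_iterate_le (hB : ∀ n x, ‖birkhoffProd f h n x‖ ≤ C * θ ^ n)
    {Mw : ℝ} (hw : ∀ x, ‖w x‖ ≤ Mw) (n : ℕ) (x : X) :
    ‖(transferOperator f h)^[n] w x‖ ≤ C * Mw * θ ^ n := by
  rw [transferOperator_iterate_apply]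
  calc _ ≤ ‖birkhoffProd f h n x‖ * ‖w (f^[n] x)‖ := norm_mul_le _ _
    _ ≤ C * θ ^ n * Mw :=
        mul_le_mul (hB n x) (hw _) (norm_nonneg _) ((norm_nonneg _).trans (hB n x))
    _ = C * Mw * θ ^ n := by ring

theorem tsum_transferOperator_iterate_eq
    (hs : ∀ x, Summable fun n => (transferOperator f h)^[n] w x) (x : X) :
    ∑' n, (transferOperator f h)^[n] w x =
      h x * ∑' n, (transferOperator f h)^[n] w (f x) + w x := by
  rw [(hs x).tsum_eq_zero_add, ← (hs (f x)).tsum_mul_left, add_comm]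
  simp only [iterate_succ_apply', iterate_zero_apply, transferOperator]

theorem summable_transferOperator_iterate [CompleteSpace R]
    (hB : ∀ n x, ‖birkhoffProd f h n x‖ ≤ C * θ ^ n) {Mw : ℝ} (hw : ∀ x, ‖w x‖ ≤ Mw)
    (hθ₀ : 0 ≤ θ) (hθ₁ : θ < 1) (x : X) : Summable fun n => (transferOperator f h)^[n] w x :=
  .of_norm_bounded ((summable_geometric_of_lt_one hθ₀ hθ₁).mul_left _)
    (norm_transferOperator_iterate_le hB hw · x)

theorem eq_zero_of_eq_transferOperator [TopologicalSpace X] [CompactSpace X] {u : X → R}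
    (hu : Continuous u) (hfix : ∀ x, u x = h x * u (f x))
    (hB : ∀ n x, ‖birkhoffProd f h n x‖ ≤ C * θ ^ n) (hθ₀ : 0 ≤ θ) (hθ₁ : θ < 1) : u = 0 := by
  obtain ⟨Mu, hMu⟩ := isCompact_univ.exists_bound_of_continuousOn hu.continuousOn
  have hu_fixed : IsFixedPt (transferOperator f h) u := funext fun x => (hfix x).symm
  have hle : ∀ n x, ‖u x‖ ≤ C * Mu * θ ^ n := fun n x => by
    rw [← congrFun (hu_fixed.iterate n) x]
    exact norm_transferOperator_iterate_le hB (fun y => hMu y trivial) n x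
  have hlim : Tendsto (fun n => C * Mu * θ ^ n) atTop (𝓝 0) := by
    simpa using (tendsto_pow_atTop_nhds_zero_of_lt_one hθ₀ hθ₁).const_mul (C * Mu)
  exact funext fun x => norm_le_zero_iff.1 (ge_of_tendsto' hlim (hle · x))

theorem eq_of_eq_transferOperator_add [TopologicalSpace X] [CompactSpace X] {v₁ v₂ : X → R}
    (hv₁ : Continuous v₁) (hv₂ : Continuous v₂)
    (hfix₁ : ∀ x, v₁ x = h x * v₁ (f x) + w x) (hfix₂ : ∀ x, v₂ x = h x * v₂ (f x) + w x)
    (hB : ∀ n x, ‖birkhoffProd f h n x‖ ≤ C * θ ^ n) (hθ₀ : 0 ≤ θ) (hθ₁ : θ < 1) : v₁ = v₂ :=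
  sub_eq_zero.1 <| eq_zero_of_eq_transferOperator (hv₁.sub hv₂)
    (fun x => by simp only [Pi.sub_apply]; linear_combination hfix₁ x - hfix₂ x) hB hθ₀ hθ₁

variable [PseudoMetricSpace X] {Λ α H : ℝ}

theorem norm_birkhoffProd_sub_le (hΛ : 1 ≤ Λ) (hα : 0 ≤ α) (hH : 0 ≤ H) (hθ : 0 ≤ θ)
    (hf : ∀ x y, dist (f x) (f y) ≤ Λ * dist x y) (hh : ∀ x y, ‖h x - h y‖ ≤ H * dist x y ^ α)
    (hB : ∀ n x, ‖birkhoffProd f h n x‖ ≤ C * θ ^ n) (n : ℕ) (x y : X) :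
    ‖birkhoffProd f h n x - birkhoffProd f h n y‖ ≤
      C ^ 2 * H * (n * (θ * Λ ^ α) ^ (n - 1)) * dist x y ^ α := by
  have hC : 0 ≤ C := by simpa using (norm_nonneg _).trans (hB 0 x)
  have hΛα : 1 ≤ Λ ^ α := Real.one_le_rpow hΛ hα
  have hterm : ∀ j ∈ range n,
      ‖birkhoffProd f h j y * (h (f^[j] x) - h (f^[j] y)) *
        birkhoffProd f h (n - 1 - j) (f^[j + 1] x)‖ ≤
      C ^ 2 * H * (θ * Λ ^ α) ^ (n - 1) * dist x y ^ α := fun j hj => by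
    have hj : j + (n - 1 - j) = n - 1 := by grind
    calc _ ≤ ‖birkhoffProd f h j y‖ * ‖h (f^[j] x) - h (f^[j] y)‖ *
          ‖birkhoffProd f h (n - 1 - j) (f^[j + 1] x)‖ := norm_mul₃_le
      _ ≤ C * θ ^ j * (H * (Λ ^ α) ^ j * dist x y ^ α) * (C * θ ^ (n - 1 - j)) := by
          gcongr
          exacts [hB _ _, norm_comp_iterate_sub_le (by linarith) hα hH hf hh j x y, hB _ _]
      _ ≤ C * θ ^ j * (H * (Λ ^ α) ^ (n - 1) * dist x y ^ α) * (C * θ ^ (n - 1 - j)) := by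
          gcongr
          grind
      _ = C ^ 2 * H * (θ ^ (j + (n - 1 - j)) * (Λ ^ α) ^ (n - 1)) * dist x y ^ α := by ring
      _ = C ^ 2 * H * (θ * Λ ^ α) ^ (n - 1) * dist x y ^ α := by rw [hj, mul_pow]
  calc _ ≤ _ := (birkhoffProd_sub_birkhoffProd f h n x y ▸ norm_sum_le _ _)
    _ ≤ _ := sum_le_sum hterm
    _ = _ := by rw [sum_const, card_range, nsmul_eq_mul]; ring

theorem norm_transferOperator_iterate_sub_le (hΛ : 1 ≤ Λ) (hα : 0 ≤ α) (hH : 0 ≤ H) (hθ : 0 ≤ θ)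
    (hf : ∀ x y, dist (f x) (f y) ≤ Λ * dist x y) (hh : ∀ x y, ‖h x - h y‖ ≤ H * dist x y ^ α)
    (hB : ∀ n x, ‖birkhoffProd f h n x‖ ≤ C * θ ^ n) {Mw K : ℝ} (hw : ∀ x, ‖w x‖ ≤ Mw)
    (hK : 0 ≤ K) (hwh : ∀ x y, ‖w x - w y‖ ≤ K * dist x y ^ α) (n : ℕ) (x y : X) :
    ‖(transferOperator f h)^[n] w x - (transferOperator f h)^[n] w y‖ ≤
      (C * K * (θ * Λ ^ α) ^ n + Mw * (C ^ 2 * H * (n * (θ * Λ ^ α) ^ (n - 1)))) *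
        dist x y ^ α := by
  have hC : 0 ≤ C := by simpa using (norm_nonneg _).trans (hB 0 x)
  simp only [transferOperator_iterate_apply]
  calc _ = ‖birkhoffProd f h n x * (w (f^[n] x) - w (f^[n] y)) +
          (birkhoffProd f h n x - birkhoffProd f h n y) * w (f^[n] y)‖ := by ring_nf
    _ ≤ ‖birkhoffProd f h n x‖ * ‖w (f^[n] x) - w (f^[n] y)‖ +
          ‖birkhoffProd f h n x - birkhoffProd f h n y‖ * ‖w (f^[n] y)‖ :=
        (norm_add_le _ _).trans (add_le_add (norm_mul_le _ _) (norm_mul_le _ _))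
    _ ≤ C * θ ^ n * (K * (Λ ^ α) ^ n * dist x y ^ α) +
          C ^ 2 * H * (n * (θ * Λ ^ α) ^ (n - 1)) * dist x y ^ α * Mw := by
        gcongr
        exacts [hB n x, norm_comp_iterate_sub_le (by linarith) hα hK hf hwh n x y,
          norm_birkhoffProd_sub_le hΛ hα hH hθ hf hh hB n x y, hw _]
    _ = _ := by ring

theorem exists_holder_tsum_transferOperator_iterate [CompleteSpace R] (hΛ : 1 ≤ Λ) (hα : 0 ≤ α)
    (hH : 0 ≤ H) (hθ : 0 ≤ θ) (hθΛ : θ * Λ ^ α < 1)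
    (hf : ∀ x y, dist (f x) (f y) ≤ Λ * dist x y) (hh : ∀ x y, ‖h x - h y‖ ≤ H * dist x y ^ α)
    (hB : ∀ n x, ‖birkhoffProd f h n x‖ ≤ C * θ ^ n) {Mw K : ℝ} (hw : ∀ x, ‖w x‖ ≤ Mw)
    (hK : 0 ≤ K) (hwh : ∀ x y, ‖w x - w y‖ ≤ K * dist x y ^ α) :
    ∃ Kv, ∀ x y, ‖∑' n, (transferOperator f h)^[n] w x - ∑' n, (transferOperator f h)^[n] w y‖ ≤
      Kv * dist x y ^ α := by
  have hr : 0 ≤ θ * Λ ^ α := by positivity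
  have hθ₁ : θ < 1 := by nlinarith [Real.one_le_rpow hΛ hα]
  have hc := ((summable_geometric_of_lt_one hr hθΛ).mul_left (C * K)).add
    (((summable_natCast_mul_pow_sub_one hr hθΛ).mul_left (C ^ 2 * H)).mul_left Mw)
  refine ⟨_, fun x y => (norm_tsum_sub_tsum_le (summable_transferOperator_iterate hB hw hθ hθ₁ x)
    (summable_transferOperator_iterate hB hw hθ hθ₁ y) (hc.mul_right (dist x y ^ α))
    fun n => norm_transferOperator_iterate_sub_le hΛ hα hH hθ hf hh hB hw hK hwh n x y).trans_eq
    tsum_mul_right⟩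

end NeumannSeries

theorem transferOperator_neumann_series_general {M : Type*} [MetricSpace M] [CompactSpace M]
    (α : ℝ) (hα : 0 < α)
    (T : M ≃ₜ M) (Λ : ℝ) (hΛ : 1 < Λ)
    (hLip : ∀ x y : M, dist (T.symm x) (T.symm y) ≤ Λ * dist x y)
    (h : M → ℂ) (H : ℝ)
    (hHold : ∀ x y : M, ‖h x - h y‖ ≤ H * dist x y ^ α)
    (C₀ θ : ℝ) (hθ : 0 < θ) (hθ1 : θ < 1) (hθΛ : θ * Λ ^ α < 1)
    (hbound : ∀ (n : ℕ) (x : M),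
      ∏ k ∈ Finset.range n, ‖h ((T.symm)^[k] x)‖ ≤ C₀ * θ ^ n)
    (w : M → ℂ) (Mw Kw : ℝ)
    (hw : ∀ x : M, ‖w x‖ ≤ Mw)
    (hwHold : ∀ x y : M, ‖w x - w y‖ ≤ Kw * dist x y ^ α) :
    ∃ v : M → ℂ,
      TendstoUniformly
        (fun N x => ∑ n ∈ Finset.range N,
          (∏ k ∈ Finset.range n, h ((T.symm)^[k] x)) * w ((T.symm)^[n] x))
        v Filter.atTop ∧
      (∃ Mv : ℝ, ∀ x : M, ‖v x‖ ≤ Mv) ∧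
      (∃ Kv : ℝ, ∀ x y : M, ‖v x - v y‖ ≤ Kv * dist x y ^ α) ∧
      Continuous v ∧
      (∀ x : M, v x = h x * v (T.symm x) + w x) ∧
      (∀ v' : M → ℂ, Continuous v' → (∀ x : M, v' x = h x * v' (T.symm x) + w x) →
        v' = v) ∧
      (∀ (N : ℕ) (x : M),
        ‖v x - ∑ n ∈ Finset.range N,
            (∏ k ∈ Finset.range n, h ((T.symm)^[k] x)) * w ((T.symm)^[n] x)‖ ≤
          C₀ * θ ^ N * (1 - θ)⁻¹ * Mw) := by
  have hB : ∀ n x, ‖birkhoffProd T.symm h n x‖ ≤ C₀ * θ ^ n := fun n x =>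
    (norm_prod _ _).trans_le (hbound n x)
  have hterm := norm_transferOperator_iterate_le hB hw
  have hs := summable_transferOperator_iterate hB hw hθ.le hθ1
  have hpartial : ∀ N x, ∑ n ∈ range N, (∏ k ∈ range n, h (T.symm^[k] x)) * w (T.symm^[n] x) =
      ∑ n ∈ range N, (transferOperator T.symm h)^[n] w x := fun N x => by
    simp only [transferOperator_iterate_apply, birkhoffProd]
  simp only [hpartial]
  set v := fun x => ∑' n, (transferOperator T.symm h)^[n] w x
  obtain ⟨Kv, hv⟩ := exists_holder_tsum_transferOperator_iterate hΛ.le hα.le (le_max_right H 0)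
    hθ.le hθΛ hLip (norm_le_max_zero_mul_rpow hHold) hB hw (le_max_right Kw 0)
    (norm_le_max_zero_mul_rpow hwHold)
  have hvc : Continuous v := continuous_of_norm_sub_le_mul_rpow hα hv
  have htail : ∀ N x, ‖v x - ∑ n ∈ range N, (transferOperator T.symm h)^[n] w x‖ ≤
      C₀ * θ ^ N * (1 - θ)⁻¹ * Mw := fun N x => by
    rw [norm_sub_rev]
    exact (norm_sub_le_of_geometric_bound_of_hasSum hθ1 (hterm · x) (hs x).hasSum N).trans_eq
      (by ring)
  have hfix : ∀ x, v x = h x * v (T.symm x) + w x := tsum_transferOperator_iterate_eq hs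
  refine ⟨v, tendstoUniformly_tsum_nat ((summable_geometric_of_lt_one hθ.le hθ1).mul_left _) hterm,
    ⟨_, fun x => by simpa using htail 0 x⟩, ⟨Kv, hv⟩, hvc, hfix,
    fun v' hv' hfix' => eq_of_eq_transferOperator_add hv' hvc hfix' hfix hB hθ.le hθ1, htail⟩

/-- Neumann series solution of `(I - L_h) v = w` for the transfer operator
`(L_h u)(x) = h(x) u(T⁻¹x)`: the partial sums `v_N = Σ_{n<N} L_hⁿ w` converge
uniformly to a bounded `α`-Hölder function `v`, which is the unique continuous solution
of `v(x) = h(x) v(T⁻¹x) + w(x)`, with `‖v − v_N‖_∞ ≤ C₀ θᴺ (1−θ)⁻¹ ‖w‖_∞`. -/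
theorem transferOperator_neumann_series {M : Type*} [MetricSpace M] [CompactSpace M]
    (α : ℝ) (hα : 0 < α) (hα1 : α ≤ 1)
    (T : M ≃ₜ M) (Λ : ℝ) (hΛ : 1 < Λ)
    (hLip : ∀ x y : M, dist (T.symm x) (T.symm y) ≤ Λ * dist x y)
    (h : M → ℂ) (H : ℝ)
    (hHold : ∀ x y : M, ‖h x - h y‖ ≤ H * dist x y ^ α)
    (C₀ θ : ℝ) (hC₀ : 0 < C₀) (hθ : 0 < θ) (hθ1 : θ < 1) (hθΛ : θ * Λ ^ α < 1)
    (hbound : ∀ (n : ℕ) (x : M),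
      ∏ k ∈ Finset.range n, ‖h ((T.symm)^[k] x)‖ ≤ C₀ * θ ^ n)
    (w : M → ℂ) (Mw Kw : ℝ)
    (hw : ∀ x : M, ‖w x‖ ≤ Mw)
    (hwHold : ∀ x y : M, ‖w x - w y‖ ≤ Kw * dist x y ^ α) :
    ∃ v : M → ℂ,
      TendstoUniformly
        (fun N x => ∑ n ∈ Finset.range N,
          (∏ k ∈ Finset.range n, h ((T.symm)^[k] x)) * w ((T.symm)^[n] x))
        v Filter.atTop ∧
      (∃ Mv : ℝ, ∀ x : M, ‖v x‖ ≤ Mv) ∧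
      (∃ Kv : ℝ, ∀ x y : M, ‖v x - v y‖ ≤ Kv * dist x y ^ α) ∧
      Continuous v ∧
      (∀ x : M, v x = h x * v (T.symm x) + w x) ∧
      (∀ v' : M → ℂ, Continuous v' → (∀ x : M, v' x = h x * v' (T.symm x) + w x) →
        v' = v) ∧
      (∀ (N : ℕ) (x : M),
        ‖v x - ∑ n ∈ Finset.range N,
            (∏ k ∈ Finset.range n, h ((T.symm)^[k] x)) * w ((T.symm)^[n] x)‖ ≤
          C₀ * θ ^ N * (1 - θ)⁻¹ * Mw) :=
  transferOperator_neumann_series_general α hα T Λ hΛ hLip h H hHold C₀ θ hθ hθ1 hθΛ hbound w Mw Kw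
    hw hwHold
end

section
/- Let M be a compact smooth manifold, T : M → M a C¹ diffeomorphism, and μ a Borel probability measure on M invariant under T. Let f : M → ℝ be C¹, let X, Y, V be continuous vector fields on M, and let ρ : M → ℝ be a continuous function. Assume: (i) X(x) = Y(x) + V(x) − (T_*V)(x) for every x ∈ M; (ii) for every C¹ function g : M → ℝ, ∫_M dg_x(Y(x)) dμ(x) = ∫_M g·ρ dμ; (iii) ∫_M d(f∘Tⁿ)_x(V(x)) dμ(x) → 0 as n → ∞; and (iv) the series Σ_{n≥0} ∫_M (f∘Tⁿ)·ρ dμ converges absolutely. Then the series Σ_{n≥0} ∫_M d(f∘Tⁿ)_x(X(x)) dμ(x) converges, and its sum equals ∫_M df_x(V(x)) dμ(x) + Σ_{n≥0} ∫_M (f∘Tⁿ)·ρ dμ. -/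
/-!
Pairing the splitting `X = Y + V − T_*V` with `d(f∘Tⁿ)` and integrating, the `Y`-term becomes
`μ((f∘Tⁿ)ρ)`, while invariance of `μ` turns `μ((T_*V)(f∘Tⁿ))` into `μ(V(f∘Tⁿ⁺¹))`. So the
`n`-th term of the response series is `μ((f∘Tⁿ)ρ) + cₙ − cₙ₊₁` with `cₙ = μ(V(f∘Tⁿ))`, and the
partial sums telescope to `c₀ − c_N + Σ_{n<N} μ((f∘Tⁿ)ρ)`.
-/

open scoped Manifold Topology
open MeasureTheory Filter Finset

theorem tendsto_sum_range_of_eq_add_sub {G : Type*} [AddCommGroup G] [TopologicalSpace G]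
    [IsTopologicalAddGroup G] {a b c : ℕ → G} (h : ∀ n, a n = b n + c n - c (n + 1))
    (hb : Summable b) (hc : Tendsto c atTop (𝓝 0)) :
    Tendsto (fun N => ∑ n ∈ range N, a n) atTop (𝓝 (c 0 + ∑' n, b n)) := by
  have hpartial : ∀ N, ∑ n ∈ range N, a n = (c 0 - c N) + ∑ n ∈ range N, b n := fun N => by
    simp only [h, add_sub_assoc, sum_add_distrib, sum_range_sub', add_comm]
  simpa only [hpartial, sub_zero] using (tendsto_const_nhds.sub hc).add hb.hasSum.tendsto_sum_nat

theorem MeasureTheory.MeasurePreserving.integral_comp_of_inverse {α G : Type*} [MeasurableSpace α]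
    [NormedAddCommGroup G] [NormedSpace ℝ G] {μ : Measure α} {T S : α → α}
    (hT : MeasurePreserving T μ μ) (hS : Measurable S) (hST : Function.LeftInverse S T)
    (hTS : Function.RightInverse S T) (g : α → G) :
    ∫ x, g (S x) ∂μ = ∫ x, g x ∂μ :=
  let e : α ≃ᵐ α := ⟨⟨T, S, hST, hTS⟩, hT.measurable, hS⟩
  (MeasurePreserving.symm e hT).integral_comp' g

section Manifold

variable {E : Type*} [NormedAddCommGroup E] [NormedSpace ℝ E]
  {H : Type*} [TopologicalSpace H] {I : ModelWithCorners ℝ E H}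
  {M : Type*} [TopologicalSpace M] [ChartedSpace H M]
  {F : Type*} [NormedAddCommGroup F] [NormedSpace ℝ F]

theorem ContMDiff.continuous_mfderiv_apply [IsManifold I 1 M] {g : M → F}
    (hg : ContMDiff I 𝓘(ℝ, F) 1 g) {W : ∀ x : M, TangentSpace I x}
    (hW : Continuous fun x : M => (⟨x, W x⟩ : TangentBundle I M)) :
    Continuous fun x : M => (mfderiv I 𝓘(ℝ, F) g x (W x) : F) :=
  continuous_snd.comp ((tangentBundleModelSpaceHomeomorph 𝓘(ℝ, F)).continuous.comp
    ((hg.continuous_tangentMap le_rfl).comp hW))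

theorem mfderiv_apply_pushforward {T S : M → M} (hT : ContMDiff I I 1 T)
    (hTS : Function.RightInverse S T) {g : M → F} (hg : ContMDiff I 𝓘(ℝ, F) 1 g)
    (V : ∀ x : M, TangentSpace I x) (x : M) :
    (mfderiv I 𝓘(ℝ, F) g x (mfderiv I I T (S x) (V (S x))) : F) =
      mfderiv I 𝓘(ℝ, F) (g ∘ T) (S x) (V (S x)) :=
  (mfderiv_comp_apply_of_eq (S x) (hg.mdifferentiableAt one_ne_zero)
    (hT.mdifferentiableAt one_ne_zero) (hTS x) _).symm

variable [MeasurableSpace M] {μ : Measure M}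

theorem integral_mfderiv_pushforward {T S : M → M} (hT : ContMDiff I I 1 T)
    (hS : Measurable S) (hμ : MeasurePreserving T μ μ) (hST : Function.LeftInverse S T)
    (hTS : Function.RightInverse S T) {g : M → F} (hg : ContMDiff I 𝓘(ℝ, F) 1 g)
    (V : ∀ x : M, TangentSpace I x) :
    ∫ x, (mfderiv I 𝓘(ℝ, F) g x (mfderiv I I T (S x) (V (S x))) : F) ∂μ =
      ∫ x, (mfderiv I 𝓘(ℝ, F) (g ∘ T) x (V x) : F) ∂μ := by
  simp_rw [mfderiv_apply_pushforward hT hTS hg V]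
  exact hμ.integral_comp_of_inverse hS hST hTS fun y => (mfderiv I 𝓘(ℝ, F) (g ∘ T) y (V y) : F)

variable [BorelSpace M] [CompactSpace M] [IsFiniteMeasure μ]

theorem integral_mfderiv_eq_of_decomp [IsManifold I 1 M] {T S : M → M} (hT : ContMDiff I I 1 T)
    (hS : Continuous S) (hμ : MeasurePreserving T μ μ) (hST : Function.LeftInverse S T)
    (hTS : Function.RightInverse S T) {g : M → F} (hg : ContMDiff I 𝓘(ℝ, F) 1 g)
    {X Y V : ∀ x : M, TangentSpace I x}
    (hY : Continuous fun x : M => (⟨x, Y x⟩ : TangentBundle I M))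
    (hV : Continuous fun x : M => (⟨x, V x⟩ : TangentBundle I M))
    (hdecomp : ∀ x : M, id (α := E) (X x) =
      id (α := E) (Y x) + id (α := E) (V x) - id (α := E) (mfderiv I I T (S x) (V (S x)))) :
    ∫ x, (mfderiv I 𝓘(ℝ, F) g x (X x) : F) ∂μ =
      (∫ x, (mfderiv I 𝓘(ℝ, F) g x (Y x) : F) ∂μ) + (∫ x, (mfderiv I 𝓘(ℝ, F) g x (V x) : F) ∂μ)
        - ∫ x, (mfderiv I 𝓘(ℝ, F) (g ∘ T) x (V x) : F) ∂μ := by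
  have integrable : ∀ {h : M → F}, Continuous h → Integrable h μ := fun hh =>
    hh.integrable_of_hasCompactSupport (.of_compactSpace _)
  have hsplit : ∀ x, (mfderiv I 𝓘(ℝ, F) g x (X x) : F) =
      mfderiv I 𝓘(ℝ, F) g x (Y x) + mfderiv I 𝓘(ℝ, F) g x (V x) -
        mfderiv I 𝓘(ℝ, F) g x (mfderiv I I T (S x) (V (S x))) := fun x => by
    have hx := hdecomp x
    simp only [id] at hx
    rw [hx]
    exact (map_sub _ _ _).trans (congrArg (· - _) (map_add _ _ _))
  have hgY_cont := hg.continuous_mfderiv_apply hY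
  have hgV_cont := hg.continuous_mfderiv_apply hV
  have hgYV_cont : Continuous fun x =>
      (mfderiv I 𝓘(ℝ, F) g x (Y x) + mfderiv I 𝓘(ℝ, F) g x (V x) : F) := hgY_cont.add hgV_cont
  have hpush_cont : Continuous fun x =>
      (mfderiv I 𝓘(ℝ, F) g x (mfderiv I I T (S x) (V (S x))) : F) :=
    (((hg.comp hT).continuous_mfderiv_apply hV).comp hS).congr fun x =>
      (mfderiv_apply_pushforward hT hTS hg V x).symm
  rw [integral_congr_ae (.of_forall hsplit),
    ← integral_mfderiv_pushforward hT hS.measurable hμ hST hTS hg V]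
  exact (integral_sub (integrable hgYV_cont) (integrable hpush_cont)).trans
    (congrArg (· - _) (integral_add (integrable hgY_cont) (integrable hgV_cont)))

end Manifold

theorem s3_formula_general
    {E : Type*} [NormedAddCommGroup E] [NormedSpace ℝ E]
    {H : Type*} [TopologicalSpace H] (I : ModelWithCorners ℝ E H)
    {M : Type*} [TopologicalSpace M] [ChartedSpace H M] [IsManifold I ((⊤ : ℕ∞) : WithTop ℕ∞) M]
    [CompactSpace M] [MeasurableSpace M] [BorelSpace M]
    (T S : M → M) (hT : ContMDiff I I 1 T) (hS : ContMDiff I I 1 S)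
    (hST : ∀ x, S (T x) = x) (hTS : ∀ x, T (S x) = x)
    (μ : Measure M) [IsProbabilityMeasure μ]
    (hinv : ∀ s : Set M, MeasurableSet s → μ (T ⁻¹' s) = μ s)
    (f : M → ℝ) (hf : ContMDiff I 𝓘(ℝ, ℝ) 1 f)
    (X Y V : ∀ x : M, TangentSpace I x)
    (hY : Continuous fun x : M => (⟨x, Y x⟩ : TangentBundle I M))
    (hV : Continuous fun x : M => (⟨x, V x⟩ : TangentBundle I M))
    (ρ : M → ℝ)
    -- (i) the space-splitting decomposition `X = Y + V − T_*V`
    (hdecomp : ∀ x : M, id (α := E) (X x) =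
      id (α := E) (Y x) + id (α := E) (V x) -
        id (α := E) (mfderiv I I T (S x) (V (S x))))
    -- (ii) `ρ` represents the unstable term: `μ(Yg) = μ(gρ)` for all C¹ `g`
    (hrep : ∀ g : M → ℝ, ContMDiff I 𝓘(ℝ, ℝ) 1 g →
      ∫ x, (mfderiv I 𝓘(ℝ, ℝ) g x (Y x) : ℝ) ∂μ = ∫ x, g x * ρ x ∂μ)
    -- (iii) decay of the coboundary terms
    (hdecay : Tendsto
      (fun n : ℕ => ∫ x, (mfderiv I 𝓘(ℝ, ℝ) (f ∘ T^[n]) x (V x) : ℝ) ∂μ)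
      atTop (nhds 0))
    -- (iv) absolute convergence of the correlation series
    (hsum : Summable fun n : ℕ => |∫ x, f (T^[n] x) * ρ x ∂μ|) :
    Tendsto
      (fun N : ℕ => ∑ n ∈ Finset.range N,
        ∫ x, (mfderiv I 𝓘(ℝ, ℝ) (f ∘ T^[n]) x (X x) : ℝ) ∂μ)
      atTop
      (nhds ((∫ x, (mfderiv I 𝓘(ℝ, ℝ) f x (V x) : ℝ) ∂μ) +
        ∑' n : ℕ, ∫ x, f (T^[n] x) * ρ x ∂μ)) := by
  have hμ : MeasurePreserving T μ μ := ⟨hT.continuous.measurable,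
    Measure.ext fun s hs => (Measure.map_apply hT.continuous.measurable hs).trans (hinv s hs)⟩
  refine tendsto_sum_range_of_eq_add_sub (fun n => ?_) hsum.of_abs hdecay
  have hfn : ContMDiff I 𝓘(ℝ, ℝ) 1 (f ∘ T^[n]) := hf.comp (hT.iterate n)
  rw [integral_mfderiv_eq_of_decomp hT hS.continuous hμ hST hTS hfn hY hV hdecomp, hrep _ hfn]
  -- `(f ∘ T^[n]) ∘ T` and `f ∘ T^[n + 1]` agree definitionally
  rfl

/-- The S3 formula (Theorem 1.2 of the paper, stated conditionally): if
`X = Y + V − T_*V`, if `ρ` represents `Y` in the sense that `μ(Yg) = μ(gρ)` for all C¹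
functions `g`, if `μ(V(f∘Tⁿ)) → 0`, and if `Σ_n μ((f∘Tⁿ)ρ)` converges absolutely, then
`Σ_{n≥0} μ(X(f∘Tⁿ))` converges with sum `μ(Vf) + Σ_{n≥0} μ((f∘Tⁿ)ρ)`. -/
theorem s3_formula
    {E : Type*} [NormedAddCommGroup E] [NormedSpace ℝ E]
    {H : Type*} [TopologicalSpace H] (I : ModelWithCorners ℝ E H)
    {M : Type*} [TopologicalSpace M] [ChartedSpace H M] [IsManifold I ((⊤ : ℕ∞) : WithTop ℕ∞) M]
    [CompactSpace M] [MeasurableSpace M] [BorelSpace M]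
    (T S : M → M) (hT : ContMDiff I I 1 T) (hS : ContMDiff I I 1 S)
    (hST : ∀ x, S (T x) = x) (hTS : ∀ x, T (S x) = x)
    (μ : Measure M) [IsProbabilityMeasure μ]
    (hinv : ∀ s : Set M, MeasurableSet s → μ (T ⁻¹' s) = μ s)
    (f : M → ℝ) (hf : ContMDiff I 𝓘(ℝ, ℝ) 1 f)
    (X Y V : ∀ x : M, TangentSpace I x)
    (hX : Continuous fun x : M => (⟨x, X x⟩ : TangentBundle I M))
    (hY : Continuous fun x : M => (⟨x, Y x⟩ : TangentBundle I M))
    (hV : Continuous fun x : M => (⟨x, V x⟩ : TangentBundle I M))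
    (ρ : M → ℝ) (hρ : Continuous ρ)
    -- (i) the space-splitting decomposition `X = Y + V − T_*V`
    (hdecomp : ∀ x : M, id (α := E) (X x) =
      id (α := E) (Y x) + id (α := E) (V x) -
        id (α := E) (mfderiv I I T (S x) (V (S x))))
    -- (ii) `ρ` represents the unstable term: `μ(Yg) = μ(gρ)` for all C¹ `g`
    (hrep : ∀ g : M → ℝ, ContMDiff I 𝓘(ℝ, ℝ) 1 g →
      ∫ x, (mfderiv I 𝓘(ℝ, ℝ) g x (Y x) : ℝ) ∂μ = ∫ x, g x * ρ x ∂μ)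
    -- (iii) decay of the coboundary terms
    (hdecay : Tendsto
      (fun n : ℕ => ∫ x, (mfderiv I 𝓘(ℝ, ℝ) (f ∘ T^[n]) x (V x) : ℝ) ∂μ)
      atTop (nhds 0))
    -- (iv) absolute convergence of the correlation series
    (hsum : Summable fun n : ℕ => |∫ x, f (T^[n] x) * ρ x ∂μ|) :
    Tendsto
      (fun N : ℕ => ∑ n ∈ Finset.range N,
        ∫ x, (mfderiv I 𝓘(ℝ, ℝ) (f ∘ T^[n]) x (X x) : ℝ) ∂μ)
      atTop
      (nhds ((∫ x, (mfderiv I 𝓘(ℝ, ℝ) f x (V x) : ℝ) ∂μ) +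
        ∑' n : ℕ, ∫ x, f (T^[n] x) * ρ x ∂μ)) :=
  s3_formula_general I T S hT hS hST hTS μ hinv f hf X Y V hY hV ρ hdecomp hrep hdecay hsum
end
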